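/- arXiv:2311.05645 — 5 statements merged into one kernel-verified Lean document; each statement's English description precedes it below -/
import Mathlib

section
/- Let nonnegative sequences {r_t}, {s_t} satisfy r_{t+1} ≤ r_t − Bγ s_t + Cγ² + Dγ³ for all t, with constants B > 0, C, D ≥ 0 and stepsize 0 < γ ≤ 1/E (E ≥ 0). Then there exists a constant stepsize γ ≤ 1/E such that (B/(T+1)) ∑_{t=0}^T s_t ≤ E r_0/(T+1) + 2 D^{1/3} (r_0/(T+1))^{2/3} + 2 (C r_0/(T+1))^{1/2}. -/
/-!
Telescoping the recursion gives, for every admissible stepsize `γ`,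
`(B / (T+1)) ∑ s_t ≤ a / γ + C γ + D γ²` with `a = r₀ / (T+1)`. The left side does not depend
on `γ`, so it suffices to bound the right side at one good `γ`: with `p = (C a)^{1/2}` and
`q = D^{1/3} a^{2/3}`, the choice `γ = a / (E a + p + q)` makes `a / γ = E a + p + q`,
`C γ ≤ p` and `D γ² ≤ q`. The degenerate cases (`a = 0`, or `E = C = D = 0`) are reached by
enlarging `a` and `E` by `ε > 0` and letting `ε → 0`.
-/

open Finset Filter Topology

theorem mul_sum_range_le_of_le_sub_add {r s : ℕ → ℝ} {b c : ℝ}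
    (h : ∀ t, r (t + 1) ≤ r t - b * s t + c) (n : ℕ) :
    b * ∑ t ∈ range n, s t ≤ r 0 - r n + n * c := by
  induction n with
  | zero => simp
  | succ n ih =>
    rw [sum_range_succ, mul_add]
    push_cast
    linarith [h n]

theorem exists_stepsize_le {a C D E p q : ℝ} (ha : 0 < a) (hE : 0 ≤ E) (hp : 0 ≤ p)
    (hq : 0 ≤ q) (hM : 0 < E * a + p + q) (hCp : C * a = p ^ 2) (hDq : D * a ^ 2 = q ^ 3) :
    ∃ γ, 0 < γ ∧ γ * E ≤ 1 ∧ a / γ + C * γ + D * γ ^ 2 ≤ E * a + 2 * p + 2 * q := by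
  set M := E * a + p + q
  have hpM : p ≤ M := by nlinarith
  have hqM : q ≤ M := by nlinarith
  refine ⟨a / M, by positivity, ?_, ?_⟩
  · rw [div_mul_eq_mul_div, div_le_one hM]
    nlinarith
  · have hC : C * (a / M) ≤ p := by
      rw [← mul_div_assoc, hCp, div_le_iff₀ hM]
      nlinarith
    have hD : D * (a / M) ^ 2 ≤ q := by
      rw [div_pow, ← mul_div_assoc, hDq, div_le_iff₀ (by positivity)]
      nlinarith [mul_le_mul hqM hqM hq hM.le]
    have ha : a / (a / M) = M := by field_simp
    linarith

theorem le_of_forall_stepsize {ψ a C D E : ℝ} (ha : 0 ≤ a) (hC : 0 ≤ C) (hD : 0 ≤ D)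
    (hE : 0 ≤ E) (h : ∀ γ, 0 < γ → γ * E ≤ 1 → ψ ≤ a / γ + C * γ + D * γ ^ 2) :
    ψ ≤ E * a + 2 * D ^ ((1 : ℝ) / 3) * a ^ ((2 : ℝ) / 3) + 2 * (C * a) ^ ((1 : ℝ) / 2) := by
  set F : ℝ → ℝ := fun ε ↦ (E + ε) * (a + ε) + 2 * D ^ ((1 : ℝ) / 3) * (a + ε) ^ ((2 : ℝ) / 3)
    + 2 * (C * (a + ε)) ^ ((1 : ℝ) / 2)
  have hF : Continuous F := by fun_prop (disch := norm_num)
  have hperturbed : ∀ ε > 0, ψ ≤ F ε := by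
    intro ε hε
    have haε : 0 < a + ε := by positivity
    obtain ⟨γ, hγ, hγE, hγψ⟩ := exists_stepsize_le (C := C) (D := D) (E := E + ε)
      (p := (C * (a + ε)) ^ ((1 : ℝ) / 2)) (q := D ^ ((1 : ℝ) / 3) * (a + ε) ^ ((2 : ℝ) / 3))
      haε (by positivity) (by positivity) (by positivity) (by positivity)
      (by rw [← Real.rpow_mul_natCast (by positivity)]; norm_num)
      (by
        rw [mul_pow, ← Real.rpow_mul_natCast hD, ← Real.rpow_mul_natCast haε.le]
        norm_num)
    calc ψ ≤ a / γ + C * γ + D * γ ^ 2 := h γ hγ (by nlinarith)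
      _ ≤ (a + ε) / γ + C * γ + D * γ ^ 2 := by gcongr; linarith
      _ ≤ F ε := by simp only [F]; linarith
  have hF0 : F 0 = E * a + 2 * D ^ ((1 : ℝ) / 3) * a ^ ((2 : ℝ) / 3)
      + 2 * (C * a) ^ ((1 : ℝ) / 2) := by simp only [F, add_zero]
  rw [← hF0]
  exact ge_of_tendsto (hF.tendsto 0 |>.mono_left (nhdsWithin_le_nhds (s := Set.Ioi 0)))
    (eventually_nhdsWithin_of_forall hperturbed)

theorem summation_lemma_sublinear_general
    (r s : ℕ → ℝ) (hr : ∀ t, 0 ≤ r t)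
    (B C D E : ℝ) (hC : 0 ≤ C) (hD : 0 ≤ D) (hE : 0 ≤ E)
    (hrec : ∀ γ : ℝ, 0 < γ → γ * E ≤ 1 →
      ∀ t, r (t + 1) ≤ r t - B * γ * s t + C * γ ^ 2 + D * γ ^ 3)
    (T : ℕ) :
    ∃ γ : ℝ, 0 < γ ∧ γ * E ≤ 1 ∧
      (B / ((T : ℝ) + 1)) * ∑ t ∈ Finset.range (T + 1), s t ≤
        E * r 0 / ((T : ℝ) + 1)
          + 2 * D ^ ((1 : ℝ) / 3) * (r 0 / ((T : ℝ) + 1)) ^ ((2 : ℝ) / 3)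
          + 2 * (C * r 0 / ((T : ℝ) + 1)) ^ ((1 : ℝ) / 2) := by
  set n : ℝ := (T : ℝ) + 1
  have hn : 0 < n := by positivity
  have hbound : ∀ γ, 0 < γ → γ * E ≤ 1 →
      B / n * ∑ t ∈ range (T + 1), s t ≤ r 0 / n / γ + C * γ + D * γ ^ 2 := by
    intro γ hγ hγE
    have hsum := mul_sum_range_le_of_le_sub_add
      (fun t ↦ (hrec γ hγ hγE t).trans_eq (add_assoc _ _ _)) (T + 1)
    push_cast at hsum
    change _ ≤ _ + n * _ at hsum
    calc B / n * ∑ t ∈ range (T + 1), s t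
        = (B * γ * ∑ t ∈ range (T + 1), s t) / (n * γ) := by field_simp
      _ ≤ (r 0 + n * (C * γ ^ 2 + D * γ ^ 3)) / (n * γ) := by
        gcongr; linarith [hr (T + 1)]
      _ = r 0 / n / γ + C * γ + D * γ ^ 2 := by field_simp; ring
  refine ⟨1 / (E + 1), by positivity, ?_, ?_⟩
  · rw [div_mul_eq_mul_div, div_le_one (by positivity)]
    linarith
  · rw [mul_div_assoc, mul_div_assoc]
    exact le_of_forall_stepsize (by positivity [hr 0]) hC hD hE hbound

theorem summation_lemma_sublinear
    (r s : ℕ → ℝ) (hr : ∀ t, 0 ≤ r t) (hs : ∀ t, 0 ≤ s t)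
    (B C D E : ℝ) (hB : 0 < B) (hC : 0 ≤ C) (hD : 0 ≤ D) (hE : 0 ≤ E)
    (hrec : ∀ γ : ℝ, 0 < γ → γ * E ≤ 1 →
      ∀ t, r (t + 1) ≤ r t - B * γ * s t + C * γ ^ 2 + D * γ ^ 3)
    (T : ℕ) :
    ∃ γ : ℝ, 0 < γ ∧ γ * E ≤ 1 ∧
      (B / ((T : ℝ) + 1)) * ∑ t ∈ Finset.range (T + 1), s t ≤
        E * r 0 / ((T : ℝ) + 1)
          + 2 * D ^ ((1 : ℝ) / 3) * (r 0 / ((T : ℝ) + 1)) ^ ((2 : ℝ) / 3)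
          + 2 * (C * r 0 / ((T : ℝ) + 1)) ^ ((1 : ℝ) / 2) :=
  summation_lemma_sublinear_general r s hr B C D E hC hD hE hrec T
end

section
/- In the EC-Approximate algorithm, suppose each f_i is L-smooth and convex, the stochastic gradients g^i have variance at most σ², ∑_i ∇f_i(x⋆) = 0 where x⋆ minimizes f, and (1/n)∑_i E‖h^i − ∇f_i(x⋆)‖² ≤ α. Then E_{t+1} ≤ (1 − δ/2) E_t + (8L/δ) F_t + 4α/δ + σ², where E_t = (1/n)∑_i E‖e_t^i‖² and F_t = E[f(x_t)] − f⋆. -/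
/-!
Compression contracts the pre-compression error `e + g - h` by `1 - δ` in mean square. Splitting
`g` into its mean `∇fᵢ(x)` and zero-mean noise isolates the variance `σ²`, and Young's inequality
trades part of the contraction for the bias `‖∇fᵢ(x) - hᵢ‖²`. That bias is at most twice
`‖∇fᵢ(x) - ∇fᵢ(x⋆)‖² + ‖hᵢ - ∇fᵢ(x⋆)‖²`; the second term averages to at most `α`, and
cocoercivity of the gradients of smooth convex functions bounds the average of the first by
`2L (f(x) - f(x⋆))`, since the gradients `∇fᵢ(x⋆)` sum to zero.
-/

open MeasureTheory Set AffineMap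
open scoped RealInnerProductSpace

section SmoothConvex

variable {F : Type*} [NormedAddCommGroup F] [InnerProductSpace ℝ F] [CompleteSpace F]
  {f : F → ℝ}

theorem HasGradientAt.hasDerivAt_comp_lineMap {f' a b : F} {t : ℝ}
    (hf : HasGradientAt f f' (lineMap a b t)) :
    HasDerivAt (f ∘ lineMap a b) ⟪f', b - a⟫ t := by
  simpa using hf.hasFDerivAt.comp_hasDerivAt t hasDerivAt_lineMap

theorem ConvexOn.add_inner_gradient_le {f' a : F} (hf : ConvexOn ℝ univ f)
    (hgrad : HasGradientAt f f' a) (b : F) : f a + ⟪f', b - a⟫ ≤ f b := by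
  have hslope := (hf.comp_affineMap (lineMap a b)).le_slope_of_hasDerivAt (mem_univ 0)
    (mem_univ 1) zero_lt_one (HasGradientAt.hasDerivAt_comp_lineMap (by simpa using hgrad))
  simp only [slope_def_field, Function.comp_apply, lineMap_apply_one, lineMap_apply_zero,
    sub_zero, div_one] at hslope
  linarith

theorem le_add_inner_gradient_add_sq {f' : F → F} {L : ℝ}
    (hgrad : ∀ x, HasGradientAt f (f' x) x) (hlip : ∀ x y, ‖f' y - f' x‖ ≤ L * ‖y - x‖)
    (a b : F) : f b ≤ f a + ⟪f' a, b - a⟫ + L / 2 * ‖b - a‖ ^ 2 := by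
  set v := b - a
  let φ : ℝ → ℝ := fun t => (f ∘ lineMap a b) t - t * ⟪f' a, v⟫ - L / 2 * t ^ 2 * ‖v‖ ^ 2
  have hφ : ∀ t, HasDerivAt φ (⟪f' (lineMap a b t) - f' a, v⟫ - L * t * ‖v‖ ^ 2) t := by
    intro t
    refine ((((hgrad (lineMap a b t)).hasDerivAt_comp_lineMap).sub
      ((hasDerivAt_id t).mul_const ⟪f' a, v⟫)).sub
      (((hasDerivAt_pow 2 t).const_mul (L / 2)).mul_const (‖v‖ ^ 2))).congr_deriv ?_
    rw [inner_sub_left]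
    ring
  have hφ' : ∀ t ∈ interior (Ici (0 : ℝ)),
      ⟪f' (lineMap a b t) - f' a, v⟫ - L * t * ‖v‖ ^ 2 ≤ 0 := by
    intro t ht
    rw [interior_Ici, mem_Ioi] at ht
    have hdist : ‖lineMap a b t - a‖ = t * ‖v‖ := by
      rw [← dist_eq_norm, dist_lineMap_left, Real.norm_of_nonneg ht.le, dist_eq_norm']
    rw [sub_nonpos]
    calc ⟪f' (lineMap a b t) - f' a, v⟫ ≤ ‖f' (lineMap a b t) - f' a‖ * ‖v‖ :=
          real_inner_le_norm _ _
      _ ≤ L * (t * ‖v‖) * ‖v‖ := by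
          rw [← hdist]; exact mul_le_mul_of_nonneg_right (hlip _ _) (norm_nonneg v)
      _ = L * t * ‖v‖ ^ 2 := by ring
  have hanti : AntitoneOn φ (Ici 0) :=
    antitoneOn_of_hasDerivWithinAt_nonpos (convex_Ici 0)
      (fun t _ => (hφ t).continuousAt.continuousWithinAt)
      (fun t _ => (hφ t).hasDerivWithinAt) hφ'
  have := hanti self_mem_Ici (show (0 : ℝ) ≤ 1 from zero_le_one) zero_le_one
  simp only [φ, Function.comp_apply, lineMap_apply_one, lineMap_apply_zero] at this
  linarith

theorem ConvexOn.norm_gradient_sub_sq_le {f' : F → F} {L : ℝ} (hf : ConvexOn ℝ univ f)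
    (hL : 0 < L) (hgrad : ∀ x, HasGradientAt f (f' x) x)
    (hlip : ∀ x y, ‖f' y - f' x‖ ≤ L * ‖y - x‖) (x y : F) :
    ‖f' x - f' y‖ ^ 2 ≤ 2 * L * (f x - f y - ⟪f' y, x - y⟫) := by
  set u := f' x - f' y
  -- Compare the tangent plane at `y` with the quadratic upper model at `x`, at the gradient step.
  set z := x - L⁻¹ • u
  have hlower := hf.add_inner_gradient_le (hgrad y) z
  have hupper := le_add_inner_gradient_add_sq hgrad hlip x z
  have hzx : z - x = -(L⁻¹ • u) := by simp [z]
  have hzy : z - y = (x - y) - L⁻¹ • u := by simp only [z]; abel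
  have hu : ⟪f' x, u⟫ - ⟪f' y, u⟫ = ‖u‖ ^ 2 := by
    rw [← inner_sub_left, real_inner_self_eq_norm_sq]
  rw [hzx, inner_neg_right, real_inner_smul_right, norm_neg, norm_smul,
    Real.norm_of_nonneg (inv_nonneg.2 hL.le)] at hupper
  rw [hzy, inner_sub_right, real_inner_smul_right] at hlower
  have hquad : L / 2 * (L⁻¹ * ‖u‖) ^ 2 = L⁻¹ * ‖u‖ ^ 2 / 2 := by field_simp
  have hgap : L⁻¹ * ‖u‖ ^ 2 / 2 ≤ f x - f y - ⟪f' y, x - y⟫ := by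
    linear_combination hlower + hupper - L⁻¹ * hu + hquad
  calc ‖u‖ ^ 2 = 2 * L * (L⁻¹ * ‖u‖ ^ 2 / 2) := by field_simp
    _ ≤ _ := by gcongr

theorem sum_norm_gradient_sub_sq_le {ι : Type*} {s : Finset ι} {f : ι → F → ℝ}
    {f' : ι → F → F} {L : ℝ} (hf : ∀ i, ConvexOn ℝ univ (f i)) (hL : 0 < L)
    (hgrad : ∀ i x, HasGradientAt (f i) (f' i x) x)
    (hlip : ∀ i x y, ‖f' i y - f' i x‖ ≤ L * ‖y - x‖) {xs : F} (hsum : ∑ i ∈ s, f' i xs = 0)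
    (x : F) :
    ∑ i ∈ s, ‖f' i x - f' i xs‖ ^ 2 ≤ 2 * L * (∑ i ∈ s, f i x - ∑ i ∈ s, f i xs) := by
  have hinner : ∑ i ∈ s, ⟪f' i xs, x - xs⟫ = 0 := by rw [← sum_inner, hsum, inner_zero_left]
  calc ∑ i ∈ s, ‖f' i x - f' i xs‖ ^ 2
      ≤ ∑ i ∈ s, 2 * L * (f i x - f i xs - ⟪f' i xs, x - xs⟫) :=
        Finset.sum_le_sum fun i _ => (hf i).norm_gradient_sub_sq_le hL (hgrad i) (hlip i) x xs
    _ = 2 * L * (∑ i ∈ s, f i x - ∑ i ∈ s, f i xs) := by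
        rw [← Finset.mul_sum, Finset.sum_sub_distrib, Finset.sum_sub_distrib, hinner, sub_zero]

end SmoothConvex

theorem one_sub_mul_norm_add_sq_le {E : Type*} [SeminormedAddCommGroup E] {δ : ℝ}
    (hδ0 : 0 < δ) (hδ1 : δ ≤ 1) (u v : E) :
    (1 - δ) * ‖u + v‖ ^ 2 ≤ (1 - δ / 2) * ‖u‖ ^ 2 + (2 / δ) * ‖v‖ ^ 2 := by
  -- Young's inequality `(s + t)² ≤ (1 + β) s² + (1 + β⁻¹) t²` with `β = δ / (2 (1 - δ))`.
  have hreal : ∀ s t : ℝ, (1 - δ) * (s + t) ^ 2 ≤ (1 - δ / 2) * s ^ 2 + (2 / δ) * t ^ 2 := by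
    intro s t
    rw [← mul_le_mul_iff_right₀ hδ0]
    have h2 : δ * ((2 / δ) * t ^ 2) = 2 * t ^ 2 := by field_simp
    nlinarith [sq_nonneg (δ * s - 2 * (1 - δ) * t),
      mul_nonneg (mul_nonneg hδ0.le (by linarith : (0 : ℝ) ≤ 3 - δ)) (sq_nonneg t)]
  calc (1 - δ) * ‖u + v‖ ^ 2 ≤ (1 - δ) * (‖u‖ + ‖v‖) ^ 2 :=
        mul_le_mul_of_nonneg_left (pow_le_pow_left₀ (norm_nonneg _) (norm_add_le u v) 2)
          (by linarith)
    _ ≤ _ := hreal _ _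

section ErrorFeedback

variable {F : Type*} [NormedAddCommGroup F] [InnerProductSpace ℝ F] [CompleteSpace F]
  {Ω : Type*} [MeasurableSpace Ω] {μ : Measure Ω} [IsProbabilityMeasure μ]

theorem integral_norm_add_sq_of_integral_eq_zero {X : Ω → F} (hX : Integrable X μ)
    (hX2 : Integrable (fun ω => ‖X ω‖ ^ 2) μ) (hmean : ∫ ω, X ω ∂μ = 0) (a : F) :
    ∫ ω, ‖a + X ω‖ ^ 2 ∂μ = ‖a‖ ^ 2 + ∫ ω, ‖X ω‖ ^ 2 ∂μ := by
  have hinner : Integrable (fun ω => 2 * ⟪a, X ω⟫) μ := (hX.const_inner a).const_mul 2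
  simp only [norm_add_sq_real]
  rw [integral_add (integrable_const_add_iff.2 hinner) hX2,
    integral_add (integrable_const _) hinner, integral_const_mul, integral_inner hX, hmean]
  simp

theorem integral_norm_compression_residual_sq_le {e h c c₀ : F} {g Δ : Ω → F} {δ σ : ℝ}
    (hδ0 : 0 < δ) (hδ1 : δ ≤ 1) (hg : Integrable g μ)
    (hg2 : Integrable (fun ω => ‖g ω‖ ^ 2) μ) (hmean : ∫ ω, g ω ∂μ = c)
    (hvar : ∫ ω, ‖g ω - c‖ ^ 2 ∂μ ≤ σ ^ 2)
    (hC : ∫ ω, ‖Δ ω - (e + g ω - h)‖ ^ 2 ∂μ ≤ (1 - δ) * ∫ ω, ‖e + g ω - h‖ ^ 2 ∂μ) :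
    ∫ ω, ‖e + g ω - h - Δ ω‖ ^ 2 ∂μ ≤
      (1 - δ / 2) * ‖e‖ ^ 2 + (4 / δ) * ‖c - c₀‖ ^ 2 + (4 / δ) * ‖h - c₀‖ ^ 2 + σ ^ 2 := by
  have hbias : ∫ ω, ‖e + g ω - h‖ ^ 2 ∂μ = ‖e + (c - h)‖ ^ 2 + ∫ ω, ‖g ω - c‖ ^ 2 ∂μ := by
    have hX : Integrable (fun ω => g ω - c) μ := hg.sub (integrable_const c)
    have hX2 : Integrable (fun ω => ‖g ω - c‖ ^ 2) μ :=
      (memLp_two_iff_integrable_sq_norm hX.1).1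
        (((memLp_two_iff_integrable_sq_norm hg.1).2 hg2).sub (memLp_const c))
    have hX0 : ∫ ω, (g ω - c) ∂μ = 0 := by
      rw [integral_sub hg (integrable_const c), hmean, integral_const, probReal_univ, one_smul,
        sub_self]
    rw [← integral_norm_add_sq_of_integral_eq_zero hX hX2 hX0]
    congr 1 with ω
    rw [add_assoc, sub_add_sub_cancel', add_sub_assoc]
  have hnoise : (1 - δ) * ∫ ω, ‖g ω - c‖ ^ 2 ∂μ ≤ σ ^ 2 :=
    (mul_le_of_le_one_left (integral_nonneg fun ω => sq_nonneg _) (by linarith)).trans hvar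
  have hanchor : ‖c - h‖ ^ 2 ≤ 2 * (‖c - c₀‖ ^ 2 + ‖h - c₀‖ ^ 2) := by
    have := norm_sub_le (c - c₀) (h - c₀)
    rw [sub_sub_sub_cancel_right] at this
    exact (pow_le_pow_left₀ (norm_nonneg _) this 2).trans add_sq_le
  calc ∫ ω, ‖e + g ω - h - Δ ω‖ ^ 2 ∂μ = ∫ ω, ‖Δ ω - (e + g ω - h)‖ ^ 2 ∂μ := by
        simp_rw [← norm_neg (e + _ - h - _), neg_sub]
    _ ≤ (1 - δ) * ‖e + (c - h)‖ ^ 2 + (1 - δ) * ∫ ω, ‖g ω - c‖ ^ 2 ∂μ := by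
        rw [← mul_add, ← hbias]; exact hC
    _ ≤ (1 - δ / 2) * ‖e‖ ^ 2 + (2 / δ) * ‖c - h‖ ^ 2 + σ ^ 2 := by
        linarith [one_sub_mul_norm_add_sq_le hδ0 hδ1 e (c - h)]
    _ ≤ (1 - δ / 2) * ‖e‖ ^ 2 + (2 / δ) * (2 * (‖c - c₀‖ ^ 2 + ‖h - c₀‖ ^ 2)) + σ ^ 2 := by
        gcongr
    _ = _ := by ring

end ErrorFeedback

theorem ec_approximate_error_descent_general
    {d n : ℕ} {Ω : Type*} [MeasurableSpace Ω] (μ : Measure Ω) [IsProbabilityMeasure μ]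
    (δ σ α L : ℝ)
    (hδ0 : 0 < δ) (hδ1 : δ ≤ 1) (hL : 0 < L)
    (f : Fin n → EuclideanSpace ℝ (Fin d) → ℝ)
    (f' : Fin n → EuclideanSpace ℝ (Fin d) → EuclideanSpace ℝ (Fin d))
    (hgrad : ∀ i x, HasGradientAt (f i) (f' i x) x)
    (hlip : ∀ i x y, ‖f' i y - f' i x‖ ≤ L * ‖y - x‖)
    (hconv : ∀ i, ConvexOn ℝ Set.univ (f i))
    (xs : EuclideanSpace ℝ (Fin d))
    (hsum : ∑ i, f' i xs = 0)
    (x : EuclideanSpace ℝ (Fin d)) (e h : Fin n → EuclideanSpace ℝ (Fin d))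
    (happrox : (1 / n : ℝ) * ∑ i, ‖h i - f' i xs‖ ^ 2 ≤ α)
    (g Δ e' : Fin n → Ω → EuclideanSpace ℝ (Fin d))
    (hint : ∀ i, Integrable (g i) μ ∧ Integrable (fun ω => ‖g i ω‖ ^ 2) μ ∧
      Integrable (fun ω => ‖Δ i ω‖ ^ 2) μ)
    (hunbias : ∀ i, ∫ ω, g i ω ∂μ = f' i x)
    (hvar : ∀ i, ∫ ω, ‖g i ω - f' i x‖ ^ 2 ∂μ ≤ σ ^ 2)
    (he' : ∀ i ω, e' i ω = e i + g i ω - h i - Δ i ω)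
    (hC : ∀ i, ∫ ω, ‖Δ i ω - (e i + g i ω - h i)‖ ^ 2 ∂μ ≤
      (1 - δ) * ∫ ω, ‖e i + g i ω - h i‖ ^ 2 ∂μ) :
    (1 / n : ℝ) * ∑ i, ∫ ω, ‖e' i ω‖ ^ 2 ∂μ ≤
      (1 - δ / 2) * ((1 / n : ℝ) * ∑ i, ‖e i‖ ^ 2)
        + (8 * L / δ) * ((1 / n : ℝ) * ∑ i, f i x - (1 / n : ℝ) * ∑ i, f i xs)
        + 4 * α / δ + σ ^ 2 := by
  have hworker : ∀ i, ∫ ω, ‖e' i ω‖ ^ 2 ∂μ ≤ (1 - δ / 2) * ‖e i‖ ^ 2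
      + (4 / δ) * ‖f' i x - f' i xs‖ ^ 2 + (4 / δ) * ‖h i - f' i xs‖ ^ 2 + σ ^ 2 := fun i => by
    simpa only [he'] using integral_norm_compression_residual_sq_le hδ0 hδ1 (hint i).1
      (hint i).2.1 (hunbias i) (hvar i) (hC i)
  have hworkers := Finset.sum_le_sum fun i (_ : i ∈ Finset.univ) => hworker i
  simp only [Finset.sum_add_distrib, ← Finset.mul_sum, Finset.sum_const, Finset.card_univ,
    Fintype.card_fin, nsmul_eq_mul] at hworkers
  have hcoco := sum_norm_gradient_sub_sq_le hconv hL hgrad hlip hsum x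
  have hn : (1 / n : ℝ) * n ≤ 1 := by rw [one_div]; exact inv_mul_le_one
  calc (1 / n : ℝ) * ∑ i, ∫ ω, ‖e' i ω‖ ^ 2 ∂μ
      ≤ (1 / n : ℝ) * ((1 - δ / 2) * ∑ i, ‖e i‖ ^ 2 + (4 / δ) * ∑ i, ‖f' i x - f' i xs‖ ^ 2
          + (4 / δ) * ∑ i, ‖h i - f' i xs‖ ^ 2 + n * σ ^ 2) := by gcongr
    _ = (1 - δ / 2) * ((1 / n : ℝ) * ∑ i, ‖e i‖ ^ 2)
          + (4 / δ) * ((1 / n : ℝ) * ∑ i, ‖f' i x - f' i xs‖ ^ 2)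
          + (4 / δ) * ((1 / n : ℝ) * ∑ i, ‖h i - f' i xs‖ ^ 2) + ((1 / n : ℝ) * n) * σ ^ 2 := by
        ring
    _ ≤ (1 - δ / 2) * ((1 / n : ℝ) * ∑ i, ‖e i‖ ^ 2)
          + (4 / δ) * ((1 / n : ℝ) * (2 * L * (∑ i, f i x - ∑ i, f i xs)))
          + (4 / δ) * α + 1 * σ ^ 2 := by gcongr
    _ = _ := by ring

theorem ec_approximate_error_descent
    {d n : ℕ} {Ω : Type*} [MeasurableSpace Ω] (μ : Measure Ω) [IsProbabilityMeasure μ]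
    (hn : 0 < n) (δ σ α L : ℝ)
    (hδ0 : 0 < δ) (hδ1 : δ ≤ 1) (hσ : 0 ≤ σ) (hα : 0 ≤ α) (hL : 0 < L)
    (f : Fin n → EuclideanSpace ℝ (Fin d) → ℝ)
    (f' : Fin n → EuclideanSpace ℝ (Fin d) → EuclideanSpace ℝ (Fin d))
    (hgrad : ∀ i x, HasGradientAt (f i) (f' i x) x)
    (hlip : ∀ i x y, ‖f' i y - f' i x‖ ≤ L * ‖y - x‖)
    (hconv : ∀ i, ConvexOn ℝ Set.univ (f i))
    (xs : EuclideanSpace ℝ (Fin d))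
    (hmin : ∀ y, (1 / n : ℝ) * ∑ i, f i xs ≤ (1 / n : ℝ) * ∑ i, f i y)
    (hsum : ∑ i, f' i xs = 0)
    (x : EuclideanSpace ℝ (Fin d)) (e h : Fin n → EuclideanSpace ℝ (Fin d))
    (happrox : (1 / n : ℝ) * ∑ i, ‖h i - f' i xs‖ ^ 2 ≤ α)
    (g Δ e' : Fin n → Ω → EuclideanSpace ℝ (Fin d))
    (hint : ∀ i, Integrable (g i) μ ∧ Integrable (fun ω => ‖g i ω‖ ^ 2) μ ∧
      Integrable (fun ω => ‖Δ i ω‖ ^ 2) μ)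
    (hunbias : ∀ i, ∫ ω, g i ω ∂μ = f' i x)
    (hvar : ∀ i, ∫ ω, ‖g i ω - f' i x‖ ^ 2 ∂μ ≤ σ ^ 2)
    (he' : ∀ i ω, e' i ω = e i + g i ω - h i - Δ i ω)
    (hC : ∀ i, ∫ ω, ‖Δ i ω - (e i + g i ω - h i)‖ ^ 2 ∂μ ≤
      (1 - δ) * ∫ ω, ‖e i + g i ω - h i‖ ^ 2 ∂μ) :
    (1 / n : ℝ) * ∑ i, ∫ ω, ‖e' i ω‖ ^ 2 ∂μ ≤
      (1 - δ / 2) * ((1 / n : ℝ) * ∑ i, ‖e i‖ ^ 2)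
        + (8 * L / δ) * ((1 / n : ℝ) * ∑ i, f i x - (1 / n : ℝ) * ∑ i, f i xs)
        + 4 * α / δ + σ ^ 2 :=
  ec_approximate_error_descent_general μ δ σ α L hδ0 hδ1 hL f f' hgrad hlip hconv xs hsum x e h
    happrox g Δ e' hint hunbias hvar he' hC
end

section
/- Let X_t, H_t, E_t, F_t ≥ 0 satisfy: X_{t+1} ≤ (1 − γμ/2)X_t − (γ/2)F_t + γ²σ²/n + 3Lγ³E_t; H_{t+1} ≤ (1 − δ/32)H_t + (8δ³/(256k⁴) + 128 L̃²γ²δ/(16k²))E_t + (128 L̃² L γ²/δ)F_t + (64/δ)(1 + L̃²γ²/n)σ²; and E_{t+1} ≤ (1 − δ/(8k))E_t + (8k/δ)H_t. Set k = 100, b = 48kLγ³/δ, a = 512kb/δ², and assume γ ≤ δ/(32√2 k L̃) with L ≤ L̃. Then the Lyapunov function Ψ_t = X_t + aH_t + bE_t satisfies Ψ_{t+1} ≤ (1 − min{γμ/2, δ/8850}) Ψ_t − (γ/4) F_t + γ² σ²/n + γ³ · 10¹¹ L σ²/δ⁴. -/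
set_option maxHeartbeats 1600000 in
theorem econtrol_lyapunov_descent_strongly_convex
    (Xs Hs Es Fs : ℕ → ℝ)
    (hXs : ∀ t, 0 ≤ Xs t) (hHs : ∀ t, 0 ≤ Hs t) (hEs : ∀ t, 0 ≤ Es t) (hFs : ∀ t, 0 ≤ Fs t)
    (δ μ L Lt σ γ k b a : ℝ) (n : ℕ) (hn : 1 ≤ n)
    (hδ0 : 0 < δ) (hδ1 : δ ≤ 1) (hμ : 0 ≤ μ) (hL : 0 < L) (hLLt : L ≤ Lt)
    (hσ : 0 ≤ σ) (hγ0 : 0 < γ)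
    (hk : k = 100) (hb : b = 48 * k * L * γ ^ 3 / δ) (ha : a = 512 * k * b / δ ^ 2)
    (hγ : γ ≤ δ / (32 * Real.sqrt 2 * k * Lt))
    (hX : ∀ t, Xs (t + 1) ≤ (1 - γ * μ / 2) * Xs t - (γ / 2) * Fs t
      + γ ^ 2 * σ ^ 2 / n + 3 * L * γ ^ 3 * Es t)
    (hH : ∀ t, Hs (t + 1) ≤ (1 - δ / 32) * Hs t
      + (8 * δ ^ 3 / (256 * k ^ 4) + 128 * Lt ^ 2 * γ ^ 2 * δ / (16 * k ^ 2)) * Es t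
      + (128 * Lt ^ 2 * L * γ ^ 2 / δ) * Fs t
      + (64 / δ) * (1 + Lt ^ 2 * γ ^ 2 / n) * σ ^ 2)
    (hE : ∀ t, Es (t + 1) ≤ (1 - δ / (8 * k)) * Es t + (8 * k / δ) * Hs t) :
    ∀ t, Xs (t + 1) + a * Hs (t + 1) + b * Es (t + 1) ≤
      (1 - min (γ * μ / 2) (δ / 8850)) * (Xs t + a * Hs t + b * Es t)
        - (γ / 4) * Fs t + γ ^ 2 * σ ^ 2 / n
        + γ ^ 3 * 10 ^ 11 * L * σ ^ 2 / δ ^ 4 := by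
  subst hk
  intro t
  have hLt0 : 0 < Lt := lt_of_lt_of_le hL hLLt
  have hn1 : (1:ℝ) ≤ (n:ℝ) := by exact_mod_cast hn
  have hn0 : (0:ℝ) < (n:ℝ) := by linarith
  have hδne : δ ≠ 0 := hδ0.ne'
  have hs2 : Real.sqrt 2 ^ 2 = 2 := Real.sq_sqrt (by norm_num)
  have hs0 : 0 < Real.sqrt 2 := Real.sqrt_pos.mpr (by norm_num)
  -- key smallness fact: 20480000 * Lt^2 * γ^2 ≤ δ^2
  have hγLt : 3200 * Real.sqrt 2 * Lt * γ ≤ δ := by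
    have h := (le_div_iff₀ (by positivity : (0:ℝ) < 32 * Real.sqrt 2 * 100 * Lt)).mp hγ
    nlinarith [h]
  have hq : 20480000 * (Lt ^ 2 * γ ^ 2) ≤ δ ^ 2 := by
    have h1 : 0 ≤ 3200 * Real.sqrt 2 * Lt * γ := by positivity
    nlinarith [mul_self_le_mul_self h1 hγLt, hs2]
  have hA0 : 0 < L * γ ^ 3 := by positivity
  have hb' : b = 4800 * (L * γ ^ 3) / δ := by rw [hb]; ring
  have ha' : a = 245760000 * (L * γ ^ 3) / δ ^ 3 := by
    rw [ha, hb]; field_simp; ring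
  have ha0 : 0 ≤ a := by rw [ha']; positivity
  have hb0 : 0 ≤ b := by rw [hb']; positivity
  set m := min (γ * μ / 2) (δ / 8850) with hm
  clear_value m
  have hm1 : m ≤ γ * μ / 2 := by rw [hm]; exact min_le_left _ _
  have hm2 : m ≤ δ / 8850 := by rw [hm]; exact min_le_right _ _
  have hm0 : 0 ≤ m := by rw [hm]; exact le_min (by positivity) (by positivity)
  -- coefficient inequalities
  have cX : (1 - γ * μ / 2) * Xs t ≤ (1 - m) * Xs t :=
    mul_le_mul_of_nonneg_right (by linarith) (hXs t)
  have cH : a * (1 - δ / 32) + b * (8 * 100 / δ) ≤ (1 - m) * a := by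
    have e1 : b * (8 * 100 / δ) = a * δ / 64 := by
      rw [ha', hb']; field_simp; ring
    have h2 : a * (δ / 64) ≤ a * (δ / 32 - δ / 8850) :=
      mul_le_mul_of_nonneg_left (by linarith) ha0
    nlinarith [mul_le_mul_of_nonneg_left hm2 ha0]
  have cE : 3 * L * γ ^ 3
      + a * (8 * δ ^ 3 / (256 * 100 ^ 4) + 128 * Lt ^ 2 * γ ^ 2 * δ / (16 * 100 ^ 2))
      + b * (1 - δ / (8 * 100)) ≤ (1 - m) * b := by
    have key : 3 * L * γ ^ 3
        + a * (8 * δ ^ 3 / (256 * 100 ^ 4) + 128 * Lt ^ 2 * γ ^ 2 * δ / (16 * 100 ^ 2))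
        + b * (1 - δ / (8 * 100)) ≤ (1 - δ / 8850) * b := by
      rw [ha', hb']
      have e2 : 245760000 * (L * γ ^ 3) / δ ^ 3
          * (8 * δ ^ 3 / (256 * 100 ^ 4) + 128 * Lt ^ 2 * γ ^ 2 * δ / (16 * 100 ^ 2))
          = 48 / 625 * (L * γ ^ 3) + 196608 * ((L * γ ^ 3) * (Lt ^ 2 * γ ^ 2)) / δ ^ 2 := by
        field_simp; ring
      have e3 : 4800 * (L * γ ^ 3) / δ * (1 - δ / (8 * 100))
          = 4800 * (L * γ ^ 3) / δ - 6 * (L * γ ^ 3) := by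
        field_simp; ring
      have e4 : (1 - δ / 8850) * (4800 * (L * γ ^ 3) / δ)
          = 4800 * (L * γ ^ 3) / δ - 32 / 59 * (L * γ ^ 3) := by
        field_simp; ring
      have e5 : 196608 * ((L * γ ^ 3) * (Lt ^ 2 * γ ^ 2)) / δ ^ 2
          ≤ 196608 / 20480000 * (L * γ ^ 3) := by
        rw [div_le_iff₀ (by positivity : (0:ℝ) < δ ^ 2)]
        nlinarith [mul_le_mul_of_nonneg_left hq hA0.le]
      rw [e2, e3, e4]
      linarith
    have : (1 - δ / 8850) * b ≤ (1 - m) * b :=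
      mul_le_mul_of_nonneg_right (by linarith) hb0
    linarith
  have h4 : 419430400000000 * (L ^ 2 * Lt ^ 2 * γ ^ 4) ≤ δ ^ 4 := by
    nlinarith [hq, sq_nonneg (Lt * γ), sq_nonneg δ, mul_le_mul_of_nonneg_right
      (show L ^ 2 ≤ Lt ^ 2 by nlinarith) (by positivity : (0:ℝ) ≤ Lt ^ 2 * γ ^ 4)]
  have cF : -(γ / 2) + a * (128 * Lt ^ 2 * L * γ ^ 2 / δ) ≤ -(γ / 4) := by
    rw [ha']
    have hδ4 : (0:ℝ) < δ ^ 4 := by positivity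
    rw [neg_add_eq_sub, sub_le_iff_le_add]
    have e1 : 245760000 * (L * γ ^ 3) / δ ^ 3 * (128 * Lt ^ 2 * L * γ ^ 2 / δ)
        = 31457280000 * (L ^ 2 * Lt ^ 2 * γ ^ 4) * γ / δ ^ 4 := by
      field_simp; ring
    rw [e1, div_le_iff₀ hδ4]
    nlinarith [mul_le_mul_of_nonneg_right h4 hγ0.le, hγ0, hδ4]
  have cS : a * ((64 / δ) * (1 + Lt ^ 2 * γ ^ 2 / n)) ≤ γ ^ 3 * 10 ^ 11 * L / δ ^ 4 := by
    have hT1 : Lt ^ 2 * γ ^ 2 / (n:ℝ) ≤ 1 := by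
      rw [div_le_one hn0]; nlinarith
    have hT0 : (0:ℝ) ≤ Lt ^ 2 * γ ^ 2 / (n:ℝ) := by positivity
    rw [ha']
    have e1 : 245760000 * (L * γ ^ 3) / δ ^ 3 * ((64 / δ) * (1 + Lt ^ 2 * γ ^ 2 / n))
        = 15728640000 * (1 + Lt ^ 2 * γ ^ 2 / n) * (L * γ ^ 3) / δ ^ 4 := by
      field_simp; ring
    rw [e1, div_le_div_iff₀ (by positivity) (by positivity)]
    nlinarith [hA0, mul_le_mul_of_nonneg_right hT1 hA0.le, pow_pos hδ0 4,
      mul_pos hA0 (pow_pos hδ0 4)]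
  have h1 := hX t
  have h2 := mul_le_mul_of_nonneg_left (hH t) ha0
  have h3 := mul_le_mul_of_nonneg_left (hE t) hb0
  have cH' := mul_le_mul_of_nonneg_right cH (hHs t)
  have cE' := mul_le_mul_of_nonneg_right cE (hEs t)
  have cF' := mul_le_mul_of_nonneg_right cF (hFs t)
  have cS' := mul_le_mul_of_nonneg_right cS (sq_nonneg σ)
  have hT : Xs (t + 1) + a * Hs (t + 1) + b * Es (t + 1) ≤
      (1 - γ * μ / 2) * Xs t
      + (a * (1 - δ / 32) + b * (8 * 100 / δ)) * Hs t
      + (3 * L * γ ^ 3 + a * (8 * δ ^ 3 / (256 * 100 ^ 4)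
          + 128 * Lt ^ 2 * γ ^ 2 * δ / (16 * 100 ^ 2)) + b * (1 - δ / (8 * 100))) * Es t
      + (-(γ / 2) + a * (128 * Lt ^ 2 * L * γ ^ 2 / δ)) * Fs t
      + γ ^ 2 * σ ^ 2 / ↑n
      + a * (64 / δ * (1 + Lt ^ 2 * γ ^ 2 / ↑n)) * σ ^ 2 := by
    nlinarith [h1, h2, h3]
  have hG : (1 - m) * Xs t + (1 - m) * a * Hs t + (1 - m) * b * Es t ≤
      (1 - m) * (Xs t + a * Hs t + b * Es t) := le_of_eq (by ring)
  calc Xs (t + 1) + a * Hs (t + 1) + b * Es (t + 1)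
      ≤ (1 - γ * μ / 2) * Xs t
      + (a * (1 - δ / 32) + b * (8 * 100 / δ)) * Hs t
      + (3 * L * γ ^ 3 + a * (8 * δ ^ 3 / (256 * 100 ^ 4)
          + 128 * Lt ^ 2 * γ ^ 2 * δ / (16 * 100 ^ 2)) + b * (1 - δ / (8 * 100))) * Es t
      + (-(γ / 2) + a * (128 * Lt ^ 2 * L * γ ^ 2 / δ)) * Fs t
      + γ ^ 2 * σ ^ 2 / ↑n
      + a * (64 / δ * (1 + Lt ^ 2 * γ ^ 2 / ↑n)) * σ ^ 2 := hT
    _ ≤ (1 - m) * Xs t + (1 - m) * a * Hs t + (1 - m) * b * Es t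
      - γ / 4 * Fs t + γ ^ 2 * σ ^ 2 / ↑n
      + γ ^ 3 * 10 ^ 11 * L / δ ^ 4 * σ ^ 2 := by
        have := cX; have := cH'; have := cE'; have := cF'; have := cS'
        linarith
    _ = (1 - m) * (Xs t + a * Hs t + b * Es t) - γ / 4 * Fs t + γ ^ 2 * σ ^ 2 / ↑n
      + γ ^ 3 * 10 ^ 11 * L * σ ^ 2 / δ ^ 4 := by ring
end

section
/- Let f be L-smooth with infimum f⋆, and suppose the averaged stochastic gradient g_t = (1/n)∑_i g^i(x_t) is unbiased with E‖g_t − ∇f(x_t)‖² ≤ σ²/n. Define the virtual iterates x̃_{t+1} = x̃_t − γ g_t, and suppose x_t − x̃_t = (γ/n)∑_i e_t^i. If γ ≤ 1/(4L), then F̃_{t+1} ≤ F̃_t − (γ/4)E‖∇f(x_t)‖² + (γ³L²/2)E_t + γ²Lσ²/(2n), where F̃_t = E[f(x̃_t)] − f⋆ and E_t = (1/n)∑_i E‖e_t^i‖². -/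
/-!
Integrating the descent lemma `f y ≤ f x + ⟪∇f x, y - x⟫ + L/2 ‖y - x‖²` at `x = x̃_t`,
`y = x̃_t - γ g_t` gives, by unbiasedness,
`E f(x̃_{t+1}) ≤ f(x̃_t) - γ ⟪∇f(x̃_t), ∇f(x_t)⟫ + Lγ²/2 E‖g_t‖²`.
The bias–variance identity bounds `E‖g_t‖² ≤ σ²/n + ‖∇f(x_t)‖²`. Writing
`-⟪a, b⟫ ≤ (‖b - a‖² - ‖b‖²)/2`, the gradient mismatch `‖∇f(x_t) - ∇f(x̃_t)‖²` is at most
`L²‖x_t - x̃_t‖² ≤ L²γ² E_t` (Jensen on the average of the `e_t^i`), and `γL ≤ 1/4` lets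
`-γ/2 ‖∇f(x_t)‖²` absorb the term `Lγ²/2 ‖∇f(x_t)‖²`.
-/

open MeasureTheory
open scoped RealInnerProductSpace Finset

section Smooth

variable {E : Type*} [NormedAddCommGroup E] [InnerProductSpace ℝ E] [CompleteSpace E]
  {f : E → ℝ} {f' : E → E} {L : ℝ}

theorem le_add_inner_add_sq_of_lipschitz_gradient (hgrad : ∀ z, HasGradientAt f (f' z) z)
    (hlip : ∀ z w, ‖f' w - f' z‖ ≤ L * ‖w - z‖) (a b : E) :
    f b ≤ f a + ⟪f' a, b - a⟫ + L / 2 * ‖b - a‖ ^ 2 := by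
  set v := b - a
  let φ : ℝ → ℝ := fun t => f (a + t • v) - t * ⟪f' a, v⟫ - L / 2 * t ^ 2 * ‖v‖ ^ 2
  have hφ : ∀ t, HasDerivAt φ (⟪f' (a + t • v) - f' a, v⟫ - L * t * ‖v‖ ^ 2) t := by
    intro t
    have hpath : HasDerivAt (fun t : ℝ => a + t • v) v t :=
      ((hasDerivAt_id t).smul_const v).const_add a |>.congr_deriv (one_smul ℝ v)
    have hf := (hgrad (a + t • v)).hasFDerivAt.comp_hasDerivAt t hpath
    change HasDerivAt (fun t => f (a + t • v)) ⟪f' (a + t • v), v⟫ t at hf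
    refine ((hf.sub ((hasDerivAt_id t).mul_const ⟪f' a, v⟫)).sub
      (((hasDerivAt_pow 2 t).const_mul (L / 2)).mul_const (‖v‖ ^ 2))).congr_deriv ?_
    rw [inner_sub_left]
    push_cast
    ring
  have hanti : AntitoneOn φ (Set.Icc 0 1) := by
    refine antitoneOn_of_hasDerivWithinAt_nonpos (convex_Icc 0 1)
      (fun t _ => (hφ t).continuousAt.continuousWithinAt)
      (fun t _ => (hφ t).hasDerivWithinAt) fun t ht => ?_
    rw [interior_Icc] at ht
    have hnear : ‖f' (a + t • v) - f' a‖ ≤ L * (t * ‖v‖) := by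
      simpa [norm_smul, abs_of_pos ht.1] using hlip a (a + t • v)
    nlinarith [real_inner_le_norm (f' (a + t • v) - f' a) v, norm_nonneg v]
  have := hanti (Set.left_mem_Icc.2 zero_le_one) (Set.right_mem_Icc.2 zero_le_one) zero_le_one
  simp only [φ, v, one_smul, add_sub_cancel, one_mul, one_pow, mul_one, zero_smul, add_zero,
    zero_mul, sub_zero, zero_pow two_ne_zero, mul_zero] at this
  linarith

theorem abs_sub_sub_inner_le_of_lipschitz_gradient (hgrad : ∀ z, HasGradientAt f (f' z) z)
    (hlip : ∀ z w, ‖f' w - f' z‖ ≤ L * ‖w - z‖) (a b : E) :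
    |f b - f a - ⟪f' a, b - a⟫| ≤ L / 2 * ‖b - a‖ ^ 2 := by
  have hneg := le_add_inner_add_sq_of_lipschitz_gradient (f := -f) (f' := -f') (L := L)
    (fun z => hasGradientAt_iff_hasFDerivAt.2 <| by simpa using (hgrad z).hasFDerivAt.neg)
    (fun z w => by simpa only [Pi.neg_apply, neg_sub_neg, norm_sub_rev] using hlip z w) a b
  have := le_add_inner_add_sq_of_lipschitz_gradient hgrad hlip a b
  simp only [Pi.neg_apply, inner_neg_left] at hneg
  rw [abs_le]
  constructor <;> linarith

end Smooth

theorem norm_card_inv_smul_sum_sq_le {ι E : Type*} [SeminormedAddCommGroup E] [NormedSpace ℝ E]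
    (s : Finset ι) (e : ι → E) :
    ‖(#s : ℝ)⁻¹ • ∑ i ∈ s, e i‖ ^ 2 ≤ (#s : ℝ)⁻¹ * ∑ i ∈ s, ‖e i‖ ^ 2 := by
  have hsum : ‖∑ i ∈ s, e i‖ ^ 2 ≤ #s * ∑ i ∈ s, ‖e i‖ ^ 2 :=
    (pow_le_pow_left₀ (norm_nonneg _) (norm_sum_le s e) 2).trans (sq_sum_le_card_mul_sum_sq ..)
  rw [norm_smul, mul_pow, norm_inv, RCLike.norm_natCast]
  calc ((#s : ℝ)⁻¹) ^ 2 * ‖∑ i ∈ s, e i‖ ^ 2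
      ≤ ((#s : ℝ)⁻¹) ^ 2 * (#s * ∑ i ∈ s, ‖e i‖ ^ 2) := by gcongr
    _ = (#s : ℝ)⁻¹ * ∑ i ∈ s, ‖e i‖ ^ 2 := by
      rcases eq_or_ne (#s : ℝ) 0 with hs | hs
      · simp [hs]
      · field_simp

section Expectation

variable {Ω E : Type*} [MeasurableSpace Ω] {μ : Measure Ω} [IsProbabilityMeasure μ]
  [NormedAddCommGroup E] [InnerProductSpace ℝ E] [CompleteSpace E] {g : Ω → E}

theorem integral_norm_sub_integral_sq (hg : Integrable g μ)
    (hg2 : Integrable (fun ω => ‖g ω‖ ^ 2) μ) :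
    ∫ ω, ‖g ω - ∫ ω', g ω' ∂μ‖ ^ 2 ∂μ = ∫ ω, ‖g ω‖ ^ 2 ∂μ - ‖∫ ω, g ω ∂μ‖ ^ 2 := by
  set m := ∫ ω, g ω ∂μ
  have hexpand : ∀ ω, ‖g ω - m‖ ^ 2 = ‖g ω‖ ^ 2 - 2 * ⟪m, g ω⟫ + ‖m‖ ^ 2 := fun ω => by
    rw [norm_sub_sq_real, real_inner_comm]
  have hcross : Integrable (fun ω => 2 * ⟪m, g ω⟫) μ := (hg.const_inner m).const_mul 2
  have hdiff : Integrable (fun ω => ‖g ω‖ ^ 2 - 2 * ⟪m, g ω⟫) μ := hg2.sub hcross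
  simp_rw [hexpand]
  rw [integral_add hdiff (integrable_const _), integral_sub hg2 hcross,
    integral_const_mul, integral_inner hg, integral_const, real_inner_self_eq_norm_sq]
  simp only [probReal_univ, one_smul]
  ring

theorem integral_comp_sub_smul_le_of_lipschitz_gradient {f : E → ℝ} {f' : E → E} {L : ℝ}
    (hgrad : ∀ z, HasGradientAt f (f' z) z) (hlip : ∀ z w, ‖f' w - f' z‖ ≤ L * ‖w - z‖)
    (y : E) (γ : ℝ) (hg : Integrable g μ) (hg2 : Integrable (fun ω => ‖g ω‖ ^ 2) μ) :
    ∫ ω, f (y - γ • g ω) ∂μ ≤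
      f y - γ * ⟪f' y, ∫ ω, g ω ∂μ⟫ + L / 2 * γ ^ 2 * ∫ ω, ‖g ω‖ ^ 2 ∂μ := by
  have hpt : ∀ ω, |f (y - γ • g ω) - (f y - γ * ⟪f' y, g ω⟫)| ≤ L / 2 * γ ^ 2 * ‖g ω‖ ^ 2 := by
    intro ω
    have := abs_sub_sub_inner_le_of_lipschitz_gradient hgrad hlip y (y - γ • g ω)
    rwa [sub_sub_cancel_left, inner_neg_right, real_inner_smul_right, norm_neg, norm_smul,
      mul_pow, Real.norm_eq_abs, sq_abs, sub_neg_eq_add, sub_add, ← mul_assoc] at this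
  have hlin : Integrable (fun ω => f y - γ * ⟪f' y, g ω⟫) μ :=
    (integrable_const _).sub ((hg.const_inner _).const_mul γ)
  have hquad : Integrable (fun ω => L / 2 * γ ^ 2 * ‖g ω‖ ^ 2) μ := hg2.const_mul _
  have hf : Continuous f := Differentiable.continuous fun z => (hgrad z).differentiableAt
  have hint : Integrable (fun ω => f (y - γ • g ω)) μ := by
    have hrem : Integrable (fun ω => f (y - γ • g ω) - (f y - γ * ⟪f' y, g ω⟫)) μ :=
      hquad.mono' ((hf.comp_aestronglyMeasurable
          (aestronglyMeasurable_const.sub (hg.1.const_smul γ))).sub hlin.1)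
        (ae_of_all _ fun ω => (Real.norm_eq_abs _).trans_le (hpt ω))
    exact (hrem.add hlin).congr (ae_of_all _ fun ω => sub_add_cancel _ _)
  calc ∫ ω, f (y - γ • g ω) ∂μ
      ≤ ∫ ω, (f y - γ * ⟪f' y, g ω⟫ + L / 2 * γ ^ 2 * ‖g ω‖ ^ 2) ∂μ :=
        integral_mono hint (hlin.add hquad) fun ω => by linarith [(abs_le.1 (hpt ω)).2]
    _ = f y - γ * ⟪f' y, ∫ ω, g ω ∂μ⟫ + L / 2 * γ ^ 2 * ∫ ω, ‖g ω‖ ^ 2 ∂μ := by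
        rw [integral_add hlin hquad, integral_sub (integrable_const _)
          ((hg.const_inner _).const_mul γ), integral_const_mul, integral_const_mul,
          integral_inner hg, integral_const]
        simp only [probReal_univ, one_smul]

end Expectation

theorem virtual_iterate_descent_lemma_general
    {d n : ℕ} {Ω : Type*} [MeasurableSpace Ω] (μ : Measure Ω) [IsProbabilityMeasure μ]
    (γ L σ fstar : ℝ) (hL : 0 < L)
    (hγ0 : 0 < γ) (hγ : γ ≤ 1 / (4 * L))
    (f : EuclideanSpace ℝ (Fin d) → ℝ)
    (f' : EuclideanSpace ℝ (Fin d) → EuclideanSpace ℝ (Fin d))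
    (hgrad : ∀ z, HasGradientAt f (f' z) z)
    (hlip : ∀ z w, ‖f' w - f' z‖ ≤ L * ‖w - z‖)
    (x xt : EuclideanSpace ℝ (Fin d)) (e : Fin n → EuclideanSpace ℝ (Fin d))
    (hlink : x - xt = (γ / n) • ∑ i, e i)
    (g : Ω → EuclideanSpace ℝ (Fin d))
    (hintg : Integrable g μ) (hintg2 : Integrable (fun ω => ‖g ω‖ ^ 2) μ)
    (hunbias : ∫ ω, g ω ∂μ = f' x)
    (hvar : ∫ ω, ‖g ω - f' x‖ ^ 2 ∂μ ≤ σ ^ 2 / n)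
    (xt' : Ω → EuclideanSpace ℝ (Fin d))
    (hxt' : ∀ ω, xt' ω = xt - γ • g ω) :
    (∫ ω, f (xt' ω) ∂μ) - fstar ≤
      (f xt - fstar) - (γ / 4) * ‖f' x‖ ^ 2
        + (γ ^ 3 * L ^ 2 / 2) * ((n : ℝ)⁻¹ * ∑ i, ‖e i‖ ^ 2)
        + γ ^ 2 * L * σ ^ 2 / (2 * n) := by
  have hstep := integral_comp_sub_smul_le_of_lipschitz_gradient hgrad hlip xt γ hintg hintg2
  rw [hunbias] at hstep
  simp only [hxt']
  have hmoment : ∫ ω, ‖g ω‖ ^ 2 ∂μ ≤ σ ^ 2 / n + ‖f' x‖ ^ 2 := by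
    have := integral_norm_sub_integral_sq hintg hintg2
    rw [hunbias] at this
    linarith
  have hdrift : ‖f' x - f' xt‖ ^ 2 ≤ L ^ 2 * γ ^ 2 * ((n : ℝ)⁻¹ * ∑ i, ‖e i‖ ^ 2) := by
    have hx : x - xt = γ • ((n : ℝ)⁻¹ • ∑ i, e i) := by rw [hlink, smul_smul, div_eq_mul_inv]
    have hjensen := norm_card_inv_smul_sum_sq_le Finset.univ e
    rw [Finset.card_univ, Fintype.card_fin] at hjensen
    calc ‖f' x - f' xt‖ ^ 2 ≤ (L * ‖x - xt‖) ^ 2 := by gcongr; exact hlip xt x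
      _ = L ^ 2 * γ ^ 2 * ‖(n : ℝ)⁻¹ • ∑ i, e i‖ ^ 2 := by
        rw [hx, norm_smul, Real.norm_eq_abs, mul_pow, mul_pow, sq_abs, mul_assoc]
      _ ≤ _ := by gcongr
  have hcross : -⟪f' xt, f' x⟫ ≤ (‖f' x - f' xt‖ ^ 2 - ‖f' x‖ ^ 2) / 2 := by
    rw [norm_sub_sq_real, real_inner_comm]
    linarith [sq_nonneg ‖f' xt‖]
  have hLγ : L * γ ≤ 1 / 4 := by
    rw [le_div_iff₀ (by positivity)] at hγ
    linarith
  have hnoise : L / 2 * γ ^ 2 * (σ ^ 2 / n) = γ ^ 2 * L * σ ^ 2 / (2 * n) := by ring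
  linarith [mul_le_mul_of_nonneg_left hmoment (by positivity : 0 ≤ L / 2 * γ ^ 2),
    mul_le_mul_of_nonneg_left hcross hγ0.le, mul_le_mul_of_nonneg_left hdrift hγ0.le,
    mul_le_mul_of_nonneg_right hLγ (by positivity : 0 ≤ γ * ‖f' x‖ ^ 2),
    (by positivity : 0 ≤ γ * ‖f' x‖ ^ 2)]

theorem virtual_iterate_descent_lemma
    {d n : ℕ} {Ω : Type*} [MeasurableSpace Ω] (μ : Measure Ω) [IsProbabilityMeasure μ]
    (hn : 0 < n) (γ L σ fstar : ℝ) (hL : 0 < L) (hσ : 0 ≤ σ)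
    (hγ0 : 0 < γ) (hγ : γ ≤ 1 / (4 * L))
    (f : EuclideanSpace ℝ (Fin d) → ℝ)
    (f' : EuclideanSpace ℝ (Fin d) → EuclideanSpace ℝ (Fin d))
    (hgrad : ∀ z, HasGradientAt f (f' z) z)
    (hlip : ∀ z w, ‖f' w - f' z‖ ≤ L * ‖w - z‖)
    (hbelow : ∀ z, fstar ≤ f z)
    (x xt : EuclideanSpace ℝ (Fin d)) (e : Fin n → EuclideanSpace ℝ (Fin d))
    (hlink : x - xt = (γ / n) • ∑ i, e i)
    (g : Ω → EuclideanSpace ℝ (Fin d))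
    (hintg : Integrable g μ) (hintg2 : Integrable (fun ω => ‖g ω‖ ^ 2) μ)
    (hunbias : ∫ ω, g ω ∂μ = f' x)
    (hvar : ∫ ω, ‖g ω - f' x‖ ^ 2 ∂μ ≤ σ ^ 2 / n)
    (xt' : Ω → EuclideanSpace ℝ (Fin d))
    (hxt' : ∀ ω, xt' ω = xt - γ • g ω) :
    (∫ ω, f (xt' ω) ∂μ) - fstar ≤
      (f xt - fstar) - (γ / 4) * ‖f' x‖ ^ 2
        + (γ ^ 3 * L ^ 2 / 2) * ((n : ℝ)⁻¹ * ∑ i, ‖e i‖ ^ 2)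
        + γ ^ 2 * L * σ ^ 2 / (2 * n) :=
  virtual_iterate_descent_lemma_general μ γ L σ fstar hL hγ0 hγ f f' hgrad hlip x xt e hlink g hintg
    hintg2 hunbias hvar xt' hxt'
end

section
/- Let X_t, E_t, F_t ≥ 0 satisfy X_{t+1} ≤ (1 − γμ/2)X_t − (γ/2)F_t + γ²σ²/n + 3Lγ³E_t and E_{t+1} ≤ (1 − δ/2)E_t + (8L/δ)F_t + 4α/δ + σ². Set a = 12Lγ³/δ and assume γ ≤ δ/(8√6 L). Then Ψ_t = X_t + a E_t satisfies Ψ_{t+1} ≤ (1 − γμ/2)Ψ_t − (γ/4)F_t + γ²σ²/n + γ³(48Lα/δ² + 12Lσ²/δ). -/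
set_option maxHeartbeats 1000000 in
theorem ec_approximate_lyapunov_descent
    (Xs Es Fs : ℕ → ℝ)
    (hXs : ∀ t, 0 ≤ Xs t) (hEs : ∀ t, 0 ≤ Es t) (hFs : ∀ t, 0 ≤ Fs t)
    (δ μ L σ α γ a : ℝ) (n : ℕ) (hn : 1 ≤ n)
    (hδ0 : 0 < δ) (hδ1 : δ ≤ 1) (hμ0 : 0 ≤ μ) (hμL : μ ≤ L) (hL : 0 < L)
    (hσ : 0 ≤ σ) (hα : 0 ≤ α) (hγ0 : 0 < γ)
    (hγ : γ ≤ δ / (8 * Real.sqrt 6 * L))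
    (ha : a = 12 * L * γ ^ 3 / δ)
    (hX : ∀ t, Xs (t + 1) ≤ (1 - γ * μ / 2) * Xs t - (γ / 2) * Fs t
      + γ ^ 2 * σ ^ 2 / n + 3 * L * γ ^ 3 * Es t)
    (hE : ∀ t, Es (t + 1) ≤ (1 - δ / 2) * Es t + (8 * L / δ) * Fs t
      + 4 * α / δ + σ ^ 2) :
    ∀ t, Xs (t + 1) + a * Es (t + 1) ≤
      (1 - γ * μ / 2) * (Xs t + a * Es t) - (γ / 4) * Fs t
        + γ ^ 2 * σ ^ 2 / n
        + γ ^ 3 * (48 * L * α / δ ^ 2 + 12 * L * σ ^ 2 / δ) := by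
  intro t
  set s := Real.sqrt 6 with hs
  have hs6 : s ^ 2 = 6 := Real.sq_sqrt (by norm_num)
  have hs2 : (2 : ℝ) ≤ s := by
    nlinarith [Real.sqrt_nonneg (6 : ℝ)]
  have hsL : 0 < 8 * s * L := by positivity
  have hγδ : γ * (8 * s * L) ≤ δ := by
    rw [div_eq_mul_inv] at hγ
    calc γ * (8 * s * L) ≤ δ * (8 * s * L)⁻¹ * (8 * s * L) := by
          exact mul_le_mul_of_nonneg_right hγ (le_of_lt hsL)
      _ = δ := by field_simp
  -- γμ ≤ δ/2
  have hγμ : γ * μ ≤ δ / 2 := by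
    have h1 : γ * μ ≤ γ * L := mul_le_mul_of_nonneg_left hμL (le_of_lt hγ0)
    nlinarith [mul_pos hγ0 hL]
  -- γ² * 384 * L² ≤ δ²
  have hγ2 : γ ^ 2 * 384 * L ^ 2 ≤ δ ^ 2 := by
    nlinarith [mul_le_mul hγδ hγδ (by positivity) (le_of_lt hδ0)]
  have ha0 : 0 ≤ a := by rw [ha]; positivity
  have hXt := hX t
  have hEt := hE t
  have hEmul : a * Es (t + 1) ≤ (a * (1 - δ / 2)) * Es t + (a * (8 * L / δ)) * Fs t
      + a * (4 * α / δ + σ ^ 2) := by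
    calc a * Es (t + 1) ≤ a * ((1 - δ / 2) * Es t + (8 * L / δ) * Fs t + 4 * α / δ + σ ^ 2) :=
          mul_le_mul_of_nonneg_left hEt ha0
      _ = (a * (1 - δ / 2)) * Es t + (a * (8 * L / δ)) * Fs t + a * (4 * α / δ + σ ^ 2) := by ring
  have hcE : 3 * L * γ ^ 3 + a * (1 - δ / 2) ≤ (1 - γ * μ / 2) * a := by
    rw [ha, ← sub_nonneg]
    have h : (1 - γ * μ / 2) * (12 * L * γ ^ 3 / δ)
        - (3 * L * γ ^ 3 + 12 * L * γ ^ 3 / δ * (1 - δ / 2))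
        = (3 * L * γ ^ 3 * δ - 6 * L * γ ^ 3 * (γ * μ)) / δ := by
      field_simp; ring
    rw [h]
    apply div_nonneg _ hδ0.le
    nlinarith [mul_le_mul_of_nonneg_left hγμ (by positivity : (0:ℝ) ≤ 6 * L * γ ^ 3)]
  have hcF : a * (8 * L / δ) ≤ γ / 4 := by
    rw [ha, div_mul_div_comm, div_le_div_iff₀ (by positivity) (by norm_num : (0:ℝ) < 4)]
    nlinarith [mul_le_mul_of_nonneg_left hγ2 (mul_nonneg (le_of_lt hγ0) (le_of_lt hL))]
  have hconst : a * (4 * α / δ + σ ^ 2) = γ ^ 3 * (48 * L * α / δ ^ 2 + 12 * L * σ ^ 2 / δ) := by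
    rw [ha]; ring
  have hcEE := mul_le_mul_of_nonneg_right hcE (hEs t)
  have hcFF := mul_le_mul_of_nonneg_right hcF (hFs t)
  have e1 : γ / 2 * Fs t = 2 * (γ / 4 * Fs t) := by ring
  have e2 : (3 * L * γ ^ 3 + a * (1 - δ / 2)) * Es t
      = 3 * L * γ ^ 3 * Es t + (a * (1 - δ / 2)) * Es t := by ring
  have e3 : (1 - γ * μ / 2) * (Xs t + a * Es t)
      = (1 - γ * μ / 2) * Xs t + (1 - γ * μ / 2) * a * Es t := by ring
  linarith only [hXt, hEmul, hcEE, hcFF, hconst, e1, e2, e3, hFs t, hEs t]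
end
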